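/- The top-p soft Bellman optimality operator is a γ-contraction in the supported ∞-norm: for all Q₁, Q₂ : S × A_p → ℝ, ‖T Q₁ − T Q₂‖_{∞,A_p} ≤ γ · ‖Q₁ − Q₂‖_{∞,A_p}, where (T Q)(s,a) = r(s,a) + γ Σ_{s'∈S} P(s'|s,a) · log Σ_{a'∈A_p} exp(Q(s',a')). -/
import Mathlib

lemma lse_lipschitz {A : Type} (Ap : Finset A) (hAp : Ap.Nonempty)
    (f g : A → ℝ) (M : ℝ) (h : ∀ a ∈ Ap, f a - g a ≤ M) :
    Real.log (∑ a ∈ Ap, Real.exp (f a)) - Real.log (∑ a ∈ Ap, Real.exp (g a)) ≤ M := by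
  have hpos : 0 < ∑ a ∈ Ap, Real.exp (g a) :=
    Finset.sum_pos (fun a _ => Real.exp_pos _) hAp
  have hle : ∑ a ∈ Ap, Real.exp (f a) ≤ Real.exp M * ∑ a ∈ Ap, Real.exp (g a) := by
    rw [Finset.mul_sum]
    refine Finset.sum_le_sum fun a ha => ?_
    rw [← Real.exp_add]
    exact Real.exp_le_exp.2 (by linarith [h a ha])
  calc Real.log (∑ a ∈ Ap, Real.exp (f a)) - Real.log (∑ a ∈ Ap, Real.exp (g a))
      ≤ Real.log (Real.exp M * ∑ a ∈ Ap, Real.exp (g a))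
          - Real.log (∑ a ∈ Ap, Real.exp (g a)) := by
        gcongr
    _ = M := by
        rw [Real.log_mul (Real.exp_pos M).ne' hpos.ne', Real.log_exp]; ring

/-- The top-p soft Bellman optimality operator
`(T Q)(s,a) = r(s,a) + γ Σ_{s'} P(s'|s,a) · log Σ_{a'∈A_p} exp(Q(s',a'))`
is a γ-contraction in the supported ∞-norm:
`‖T Q₁ − T Q₂‖_{∞,A_p} ≤ γ · ‖Q₁ − Q₂‖_{∞,A_p}`. -/
theorem topP_soft_optimality_contraction
    {S A : Type} [Fintype S] [Fintype A] [Nonempty S] [Nonempty A]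
    (P : S → A → S → ℝ)
    (hP0 : ∀ s a s', 0 ≤ P s a s')
    (hP1 : ∀ s a, ∑ s', P s a s' = 1)
    (r : S → A → ℝ) (γ : ℝ) (hγ0 : 0 ≤ γ) (hγ1 : γ < 1)
    (Ap : Finset A) (hAp : Ap.Nonempty)
    (T : (S → A → ℝ) → (S → A → ℝ))
    (hT : ∀ Q s a, T Q s a = r s a + γ * ∑ s', P s a s' *
        Real.log (∑ a' ∈ Ap, Real.exp (Q s' a')))
    (normInf : (S → A → ℝ) → ℝ)
    (hnorm : ∀ Φ : S → A → ℝ,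
        normInf Φ = Finset.univ.sup' Finset.univ_nonempty
          fun s => Ap.sup' hAp fun a => |Φ s a|) :
    ∀ Q₁ Q₂ : S → A → ℝ,
      normInf (fun s a => T Q₁ s a - T Q₂ s a) ≤ γ * normInf (fun s a => Q₁ s a - Q₂ s a) := by
  intro Q₁ Q₂
  set M := normInf (fun s a => Q₁ s a - Q₂ s a) with hM
  have hbound : ∀ s, ∀ a ∈ Ap, |Q₁ s a - Q₂ s a| ≤ M := by
    intro s a ha
    rw [hM, hnorm]
    exact le_trans (Finset.le_sup' (fun a => |Q₁ s a - Q₂ s a|) ha)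
      (Finset.le_sup' (f := fun s => Ap.sup' hAp fun a => |Q₁ s a - Q₂ s a|)
        (Finset.mem_univ s))
  have hlse : ∀ s', |Real.log (∑ a' ∈ Ap, Real.exp (Q₁ s' a')) -
      Real.log (∑ a' ∈ Ap, Real.exp (Q₂ s' a'))| ≤ M := by
    intro s'
    rw [abs_le]
    constructor
    · have := lse_lipschitz Ap hAp (fun a => Q₂ s' a) (fun a => Q₁ s' a) M
        (fun a ha => by have := abs_le.1 (hbound s' a ha); linarith)
      linarith
    · exact lse_lipschitz Ap hAp _ _ M
        (fun a ha => (abs_le.1 (hbound s' a ha)).2)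
  have key : ∀ s a, |T Q₁ s a - T Q₂ s a| ≤ γ * M := by
    intro s a
    rw [hT, hT]
    have : (r s a + γ * ∑ s', P s a s' * Real.log (∑ a' ∈ Ap, Real.exp (Q₁ s' a')))
        - (r s a + γ * ∑ s', P s a s' * Real.log (∑ a' ∈ Ap, Real.exp (Q₂ s' a')))
        = γ * ∑ s', P s a s' * (Real.log (∑ a' ∈ Ap, Real.exp (Q₁ s' a'))
            - Real.log (∑ a' ∈ Ap, Real.exp (Q₂ s' a'))) := by
      simp only [Finset.mul_sum]
      rw [add_sub_add_left_eq_sub, ← Finset.sum_sub_distrib]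
      exact Finset.sum_congr rfl fun s' _ => by ring
    rw [this, abs_mul, abs_of_nonneg hγ0]
    gcongr
    calc |∑ s', P s a s' * (Real.log (∑ a' ∈ Ap, Real.exp (Q₁ s' a'))
            - Real.log (∑ a' ∈ Ap, Real.exp (Q₂ s' a')))|
        ≤ ∑ s', |P s a s' * (Real.log (∑ a' ∈ Ap, Real.exp (Q₁ s' a'))
            - Real.log (∑ a' ∈ Ap, Real.exp (Q₂ s' a')))| := Finset.abs_sum_le_sum_abs _ _
      _ ≤ ∑ s', P s a s' * M := by
          refine Finset.sum_le_sum fun s' _ => ?_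
          rw [abs_mul, abs_of_nonneg (hP0 s a s')]
          exact mul_le_mul_of_nonneg_left (hlse s') (hP0 s a s')
      _ = M := by rw [← Finset.sum_mul, hP1, one_mul]
  rw [hnorm]
  apply Finset.sup'_le
  intro s _
  apply Finset.sup'_le
  intro a _
  exact key s a
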